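/- arXiv:math/0701710 — 2 statements merged into one kernel-verified Lean document; each statement's English description precedes it below -/
import Mathlib

section
/- Let G be a group and L = M(G,2). If G is abelian then N(L)=L; if G is not abelian then N(L)=Z(G). Moreover, if G is an elementary abelian 2-group then Z(L)=L, and otherwise Z(L)=Z(G)∩{x∈G: x²=1}. -/
/-- The Chein loop M(G,2) on G ∪ Ḡ (the copy Ḡ realized via Sum.inr):
x∘y = xy, x∘ȳ = (yx)‾, x̄∘y = (xy⁻¹)‾, x̄∘ȳ = y⁻¹x. -/
def cheinMul {G : Type*} [Group G] : G ⊕ G → G ⊕ G → G ⊕ G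
  | Sum.inl x, Sum.inl y => Sum.inl (x * y)
  | Sum.inl x, Sum.inr y => Sum.inr (y * x)
  | Sum.inr x, Sum.inl y => Sum.inr (x * y⁻¹)
  | Sum.inr x, Sum.inr y => Sum.inl (y⁻¹ * x)

/-- The nucleus of a magma. -/
def nucSetM {L : Type*} (mul : L → L → L) : Set L :=
  {x | ∀ y z : L, mul x (mul y z) = mul (mul x y) z ∧
        mul y (mul x z) = mul (mul y x) z ∧
        mul y (mul z x) = mul (mul y z) x}

/-- The center of a magma: nuclear elements commuting with everything. -/
def centerSetM {L : Type*} (mul : L → L → L) : Set L :=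
  {x | x ∈ nucSetM mul ∧ ∀ y : L, mul x y = mul y x}

private lemma nuc_of_center {G : Type*} [Group G] (a : G)
    (ha : ∀ g : G, g * a = a * g) : Sum.inl a ∈ nucSetM (cheinMul (G := G)) := by
  have hc : ∀ g : G, Commute g a := fun g => ha g
  have ha' : ∀ g : G, g * a⁻¹ = a⁻¹ * g := fun g => (hc g).inv_right
  have ha2 : ∀ g k : G, g * (a * k) = a * (g * k) := fun g k => by
    rw [← mul_assoc, ha, mul_assoc]
  have ha2' : ∀ g k : G, g * (a⁻¹ * k) = a⁻¹ * (g * k) := fun g k => by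
    rw [← mul_assoc, ha', mul_assoc]
  intro y z
  rcases y with b | b <;> rcases z with c | c <;>
    refine ⟨?_, ?_, ?_⟩ <;>
    simp [cheinMul, mul_assoc, mul_inv_rev, ha, ha', ha2, ha2']

private lemma nuc_univ {G : Type*} [Group G] (h : ∀ a b : G, a * b = b * a) :
    nucSetM (cheinMul (G := G)) = Set.univ := by
  have h' : ∀ a b c : G, a * (b * c) = b * (a * c) := fun a b c => by
    rw [← mul_assoc, h a b, mul_assoc]
  ext x
  simp only [Set.mem_univ, iff_true]
  intro y z
  rcases x with a|a <;> rcases y with b|b <;> rcases z with c|c <;>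
    refine ⟨?_, ?_, ?_⟩ <;>
    simp [cheinMul, mul_assoc, mul_inv_rev, h, h']

/-- For L = M(G,2): if G is abelian then N(L) = L, otherwise N(L) = Z(G);
if G is an elementary abelian 2-group then Z(L) = L, otherwise
Z(L) = Z(G) ∩ {x ∈ G : x² = 1}. -/
theorem stmt17 (G : Type*) [Group G] :
    ((∀ a b : G, a * b = b * a) →
      nucSetM (cheinMul (G := G)) = Set.univ) ∧
    (¬ (∀ a b : G, a * b = b * a) →
      nucSetM (cheinMul (G := G)) = Sum.inl '' {x : G | x ∈ Subgroup.center G}) ∧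
    ((∀ a : G, a * a = 1) →
      centerSetM (cheinMul (G := G)) = Set.univ) ∧
    (¬ (∀ a : G, a * a = 1) →
      centerSetM (cheinMul (G := G))
        = Sum.inl '' {x : G | x ∈ Subgroup.center G ∧ x * x = 1}) := by
  refine ⟨nuc_univ, fun hne => ?_, fun h2 => ?_, fun hne => ?_⟩
  · -- nonabelian nucleus
    ext x
    constructor
    · intro hx
      rcases x with a | a
      · refine ⟨a, Subgroup.mem_center_iff.mpr fun g => ?_, rfl⟩
        have := (hx (Sum.inr 1) (Sum.inl g⁻¹)).1
        simpa [cheinMul] using this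
      · exfalso
        apply hne
        have hcen : ∀ b : G, b * a = a * b := by
          intro b
          have := (hx (Sum.inl b⁻¹) (Sum.inr 1)).1
          simpa [cheinMul] using this
        intro b c
        have h1 := (hx (Sum.inl b⁻¹) (Sum.inr c⁻¹)).1
        simp [cheinMul, mul_inv_rev] at h1
        -- h1 : b * c * a = c * a * b (roughly); massage
        have h2 : b * (c * a) = c * (a * b) := by
          simpa [mul_assoc] using h1
        rw [← hcen b, ← mul_assoc, ← mul_assoc] at h2
        exact mul_right_cancel h2
    · rintro ⟨a, ha, rfl⟩
      exact nuc_of_center a (Subgroup.mem_center_iff.mp ha)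
  · -- elementary abelian 2-group center
    have hinv : ∀ a : G, a⁻¹ = a := fun a => inv_eq_of_mul_eq_one_right (h2 a)
    have hcomm : ∀ a b : G, a * b = b * a := by
      intro a b
      calc a * b = (a * b)⁻¹ := (hinv _).symm
        _ = b⁻¹ * a⁻¹ := mul_inv_rev a b
        _ = b * a := by rw [hinv, hinv]
    ext x
    simp only [Set.mem_univ, iff_true]
    constructor
    · rw [nuc_univ hcomm]; trivial
    · intro y
      rcases x with a | a <;> rcases y with b | b <;> simp [cheinMul, hinv, hcomm a b]
  · -- general center
    ext x
    constructor
    · rintro ⟨hnuc, hcom⟩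
      rcases x with a | a
      · refine ⟨a, ⟨Subgroup.mem_center_iff.mpr fun g => ?_, ?_⟩, rfl⟩
        · have := hcom (Sum.inl g)
          simp [cheinMul] at this
          exact this.symm
        · have := hcom (Sum.inr 1)
          simp [cheinMul] at this
          -- this : a = a⁻¹
          nth_rewrite 2 [this]
          exact mul_inv_cancel a
      · exfalso
        apply hne
        intro b
        have := hcom (Sum.inl b)
        simp [cheinMul] at this
        -- this : b⁻¹ = b (roughly)
        exact mul_eq_one_iff_eq_inv.mpr this.symm
    · rintro ⟨a, ⟨hz, hsq⟩, rfl⟩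
      have hai : a⁻¹ = a := inv_eq_of_mul_eq_one_right hsq
      refine ⟨nuc_of_center a (Subgroup.mem_center_iff.mp hz), fun y => ?_⟩
      rcases y with b | b <;>
        simp [cheinMul, hai, Subgroup.mem_center_iff.mp hz b]
end

section
/- Let G be a group, L=M(G,2), and S a normal subloop of L. Then either S⊆G (and S⊴G), or both G/(S∩G) and L/S are elementary abelian 2-groups. Conversely, every normal subgroup S of G is a normal subloop of L. -/
/-- A subset of a magma is a subloop if it contains the unit, is closed under
multiplication, and equations are solvable within it. -/
def IsSubloopM {L : Type*} (mul : L → L → L) (one : L) (A : Set L) : Prop :=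
  one ∈ A ∧ (∀ a ∈ A, ∀ b ∈ A, mul a b ∈ A) ∧
    (∀ a ∈ A, ∀ b ∈ A, ∃ c ∈ A, mul a c = b) ∧
    (∀ a ∈ A, ∀ b ∈ A, ∃ c ∈ A, mul c a = b)

/-- A subloop A is normal if xA = Ax, x(Ay) = (xA)y and x(yA) = (xy)A. -/
def IsNormalSubloopM {L : Type*} (mul : L → L → L) (one : L) (A : Set L) : Prop :=
  IsSubloopM mul one A ∧
  (∀ x : L, (fun a => mul x a) '' A = (fun a => mul a x) '' A) ∧
  (∀ x y : L, (fun b => mul x b) '' ((fun a => mul a y) '' A)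
      = (fun b => mul b y) '' ((fun a => mul x a) '' A)) ∧
  (∀ x y : L, (fun b => mul x b) '' ((fun a => mul y a) '' A)
      = (fun a => mul (mul x y) a) '' A)

/-! The elements of S lying in G form a normal subgroup T of G. If S also contains some ā, then
for every g the identity xS = Sx at x = g produces (agg)‾ ∈ S, and (agg)‾ ∘ ā = g², so G/T has
exponent 2. The Chein construction is functorial, so S contains the kernel of the loop
homomorphism M(G,2) → M(G/T,2), and M(G/T,2) is an elementary abelian 2-group; hence squares,
commutators and associators of L lie in S. Conversely, in any loop translations are bijections
and hence carry fibres of a homomorphism onto fibres, so the kernel of M(G,2) → M(G/T,2),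
namely T itself, is a normal subloop. -/

open Function

theorem Function.Semiconj.image_preimage {α β : Type*} {f : α → β} {φ : α → α} {ψ : β → β}
    (h : Semiconj f φ ψ) (hφ : Surjective φ) (hψ : Injective ψ) (s : Set β) :
    φ '' (f ⁻¹' s) = f ⁻¹' (ψ '' s) := by
  ext y
  constructor
  · rintro ⟨x, hx, rfl⟩
    exact ⟨f x, hx, (h x).symm⟩
  · rintro ⟨b, hb, hfy⟩
    obtain ⟨x, rfl⟩ := hφ y
    exact ⟨x, show f x ∈ s from hψ (hfy.trans (h x)) ▸ hb, rfl⟩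

structure IsLoopM {L : Type*} (mul : L → L → L) (one : L) : Prop where
  one_mul : ∀ a, mul one a = a
  mul_one : ∀ a, mul a one = a
  bijective_mul_left : ∀ a, Bijective (mul a)
  bijective_mul_right : ∀ a, Bijective (fun b => mul b a)

namespace IsLoopM

variable {L M : Type*} {mulL : L → L → L} {mulM : M → M → M} {oneL : L} {oneM : M}
  {π : L → M}

theorem image_mul_left_preimage (hL : IsLoopM mulL oneL) (hM : IsLoopM mulM oneM)
    (hπ : ∀ a b, π (mulL a b) = mulM (π a) (π b)) (x : L) (c : M) :
    mulL x '' (π ⁻¹' {c}) = π ⁻¹' {mulM (π x) c} := by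
  rw [Semiconj.image_preimage (fun a => hπ x a) (hL.bijective_mul_left x).2
    (hM.bijective_mul_left (π x)).1, Set.image_singleton]

theorem image_mul_right_preimage (hL : IsLoopM mulL oneL) (hM : IsLoopM mulM oneM)
    (hπ : ∀ a b, π (mulL a b) = mulM (π a) (π b)) (x : L) (c : M) :
    (fun a => mulL a x) '' (π ⁻¹' {c}) = π ⁻¹' {mulM c (π x)} := by
  rw [Semiconj.image_preimage (fun a => hπ a x) (hL.bijective_mul_right x).2
    (hM.bijective_mul_right (π x)).1, Set.image_singleton]

theorem exists_ker_eq_mul_of_map_eq (hL : IsLoopM mulL oneL) (hM : IsLoopM mulM oneM)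
    (hπ : ∀ a b, π (mulL a b) = mulM (π a) (π b)) {p q : L} (h : π p = π q) :
    ∃ s ∈ π ⁻¹' {oneM}, p = mulL q s := by
  have hp : p ∈ π ⁻¹' {mulM (π q) oneM} := by simp [h, hM.mul_one]
  obtain ⟨s, hs, rfl⟩ := hL.image_mul_left_preimage hM hπ q oneM ▸ hp
  exact ⟨s, hs, rfl⟩

theorem isNormalSubloopM_preimage_one (hL : IsLoopM mulL oneL) (hM : IsLoopM mulM oneM)
    (hπ : ∀ a b, π (mulL a b) = mulM (π a) (π b)) (hπ1 : π oneL = oneM) :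
    IsNormalSubloopM mulL oneL (π ⁻¹' {oneM}) := by
  have hleft := hL.image_mul_left_preimage hM hπ
  have hright := hL.image_mul_right_preimage hM hπ
  refine ⟨⟨hπ1, fun a ha b hb => ?_, fun a ha b hb => ?_, fun a ha b hb => ?_⟩,
    fun x => ?_, fun x y => ?_, fun x y => ?_⟩
  · simp_all [hM.one_mul]
  · show b ∈ mulL a '' (π ⁻¹' {oneM})
    simp_all [hM.one_mul]
  · show b ∈ (fun c => mulL c a) '' (π ⁻¹' {oneM})
    simp_all [hM.one_mul]
  · rw [hleft, hright, hM.one_mul, hM.mul_one]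
  · rw [hright, hleft, hleft, hright, hM.one_mul, hM.mul_one]
  · rw [hleft, hleft, hleft, hπ, hM.mul_one, hM.mul_one]

end IsLoopM

section Chein

variable {G H : Type*} [Group G] [Group H]

theorem cheinMul_isLoopM : IsLoopM (cheinMul (G := G)) (Sum.inl 1) where
  one_mul := by rintro (a | a) <;> simp [cheinMul]
  mul_one := by rintro (a | a) <;> simp [cheinMul]
  bijective_mul_left a := by
    refine ⟨fun b c h => ?_, fun c => ?_⟩
    · rcases a with a | a <;> rcases b with b | b <;> rcases c with c | c <;> simp_all [cheinMul]
    · rcases a with a | a <;> rcases c with c | c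
      · exact ⟨Sum.inl (a⁻¹ * c), by simp [cheinMul]⟩
      · exact ⟨Sum.inr (c * a⁻¹), by simp [cheinMul]⟩
      · exact ⟨Sum.inr (a * c⁻¹), by simp [cheinMul]⟩
      · exact ⟨Sum.inl (c⁻¹ * a), by simp [cheinMul]⟩
  bijective_mul_right a := by
    refine ⟨fun b c h => ?_, fun c => ?_⟩
    · rcases a with a | a <;> rcases b with b | b <;> rcases c with c | c <;> simp_all [cheinMul]
    · rcases a with a | a <;> rcases c with c | c
      · exact ⟨Sum.inl (c * a⁻¹), by simp [cheinMul]⟩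
      · exact ⟨Sum.inr (c * a), by simp [cheinMul]⟩
      · exact ⟨Sum.inr (a * c), by simp [cheinMul]⟩
      · exact ⟨Sum.inl (a⁻¹ * c), by simp [cheinMul]⟩

theorem map_cheinMul (f : G →* H) (p q : G ⊕ G) :
    Sum.map f f (cheinMul p q) = cheinMul (Sum.map f f p) (Sum.map f f q) := by
  rcases p with a | a <;> rcases q with b | b <;> simp [cheinMul]

end Chein

section ExponentTwo

variable {E : Type*} [Group E]

theorem mul_comm_of_mul_self_eq_one (hE : ∀ x : E, x * x = 1) (a b : E) : a * b = b * a :=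
  (Commute.of_orderOf_dvd_two (fun g => orderOf_dvd_of_pow_eq_one (by rw [pow_two, hE])) a b).eq

theorem cheinMul_self_of_mul_self_eq_one (hE : ∀ x : E, x * x = 1) (p : E ⊕ E) :
    cheinMul p p = Sum.inl 1 := by
  rcases p with a | a <;> simp [cheinMul, hE]

theorem cheinMul_comm_of_mul_self_eq_one (hE : ∀ x : E, x * x = 1) (p q : E ⊕ E) :
    cheinMul p q = cheinMul q p := by
  let _ : CommGroup E := { mul_comm := mul_comm_of_mul_self_eq_one hE }
  have hinv (x : E) : x⁻¹ = x := inv_eq_of_mul_eq_one_right (hE x)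
  rcases p with a | a <;> rcases q with b | b <;> simp [cheinMul, hinv, mul_comm]

theorem cheinMul_assoc_of_mul_self_eq_one (hE : ∀ x : E, x * x = 1) (p q r : E ⊕ E) :
    cheinMul (cheinMul p q) r = cheinMul p (cheinMul q r) := by
  let _ : CommGroup E := { mul_comm := mul_comm_of_mul_self_eq_one hE }
  have hinv (x : E) : x⁻¹ = x := inv_eq_of_mul_eq_one_right (hE x)
  rcases p with a | a <;> rcases q with b | b <;> rcases r with c | c <;>
    simp only [cheinMul, hinv, Sum.inl.injEq, Sum.inr.injEq] <;> ac_rfl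

end ExponentTwo

section NormalSubloop

variable {G : Type*} [Group G] {S : Set (G ⊕ G)}

def inlSubgroup (hS : IsSubloopM cheinMul (Sum.inl 1) S) : Subgroup G where
  carrier := {g | Sum.inl g ∈ S}
  one_mem' := hS.1
  mul_mem' hu hv := hS.2.1 _ hu _ hv
  inv_mem' {u} hu := by
    obtain ⟨c | c, hc, he⟩ := hS.2.2.1 _ hu _ hS.1
    · have huc : u * c = 1 := by simpa [cheinMul] using he
      show Sum.inl u⁻¹ ∈ S
      rwa [← eq_inv_of_mul_eq_one_right huc]
    · simp [cheinMul] at he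

theorem mem_inlSubgroup (hS : IsSubloopM cheinMul (Sum.inl 1) S) {g : G} :
    g ∈ inlSubgroup hS ↔ Sum.inl g ∈ S :=
  Iff.rfl

theorem inlSubgroup_normal (hS : IsSubloopM cheinMul (Sum.inl 1) S)
    (hcomm : ∀ x, (fun a => cheinMul x a) '' S = (fun a => cheinMul a x) '' S) :
    (inlSubgroup hS).Normal := by
  refine ⟨fun n hn g => ?_⟩
  have hgn : Sum.inl (g * n) ∈ (fun a => cheinMul a (Sum.inl g)) '' S :=
    hcomm _ ▸ ⟨Sum.inl n, hn, rfl⟩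
  obtain ⟨u | u, hu, he⟩ := hgn
  · have hug : u * g = g * n := by simpa [cheinMul] using he
    rwa [mem_inlSubgroup, ← eq_mul_inv_of_mul_eq hug]
  · simp [cheinMul] at he

theorem mul_self_mem_inlSubgroup (hS : IsSubloopM cheinMul (Sum.inl 1) S)
    (hcomm : ∀ x, (fun a => cheinMul x a) '' S = (fun a => cheinMul a x) '' S)
    {a : G} (ha : Sum.inr a ∈ S) (g : G) : g * g ∈ inlSubgroup hS := by
  have hag : Sum.inr (a * g) ∈ (fun b => cheinMul b (Sum.inl g)) '' S :=
    hcomm _ ▸ ⟨Sum.inr a, ha, rfl⟩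
  obtain ⟨u | u, hu, he⟩ := hag
  · simp [cheinMul] at he
  · have hug : u * g⁻¹ = a * g := by simpa [cheinMul] using he
    have hprod : cheinMul (Sum.inr u) (Sum.inr a) = Sum.inl (g * g) := by
      simp [cheinMul, eq_mul_of_mul_inv_eq hug, mul_assoc]
    exact (mem_inlSubgroup hS).2 (hprod ▸ hS.2.1 _ hu _ ha)

theorem eq_image_inl_inlSubgroup (hS : IsSubloopM cheinMul (Sum.inl 1) S)
    (hinr : ∀ a, Sum.inr a ∉ S) : S = Sum.inl '' (inlSubgroup hS : Set G) := by
  ext (g | g)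
  · simp [mem_inlSubgroup]
  · simp [hinr]

theorem preimage_sumMap_mk_inl_one (T : Subgroup G) [T.Normal] :
    Sum.map (QuotientGroup.mk' T) (QuotientGroup.mk' T) ⁻¹' {Sum.inl 1} =
      Sum.inl '' (T : Set G) := by
  ext (g | g) <;> simp

theorem squares_commutators_associators_mem_of_inr_mem
    (hS : IsNormalSubloopM cheinMul (Sum.inl 1) S) {a : G} (ha : Sum.inr a ∈ S) :
    (∀ x : G, Sum.inl (x * x) ∈ S) ∧
    (∀ x y : G, Sum.inl (x * y * x⁻¹ * y⁻¹) ∈ S) ∧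
    (∀ p : G ⊕ G, cheinMul p p ∈ S) ∧
    (∀ p q : G ⊕ G, ∃ s ∈ S, cheinMul p q = cheinMul (cheinMul q p) s) ∧
    (∀ p q r : G ⊕ G, ∃ s ∈ S,
      cheinMul (cheinMul p q) r = cheinMul (cheinMul p (cheinMul q r)) s) := by
  obtain ⟨hsub, hcomm, -, -⟩ := hS
  set T := inlSubgroup hsub
  have _ : T.Normal := inlSubgroup_normal hsub hcomm
  have hsq : ∀ g, g * g ∈ T := mul_self_mem_inlSubgroup hsub hcomm ha
  have hE : ∀ q : G ⧸ T, q * q = 1 := by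
    rintro ⟨g⟩
    exact (QuotientGroup.eq_one_iff _).2 (hsq g)
  set π := Sum.map (QuotientGroup.mk' T) (QuotientGroup.mk' T)
  have hπ : ∀ p q, π (cheinMul p q) = cheinMul (π p) (π q) := map_cheinMul _
  have hker : π ⁻¹' {Sum.inl 1} ⊆ S := by
    rw [preimage_sumMap_mk_inl_one]
    rintro _ ⟨g, hg, rfl⟩
    exact hg
  have hsolve (p q : G ⊕ G) (h : π p = π q) : ∃ s ∈ S, p = cheinMul q s :=
    let ⟨s, hs, he⟩ := cheinMul_isLoopM.exists_ker_eq_mul_of_map_eq cheinMul_isLoopM hπ h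
    ⟨s, hker hs, he⟩
  refine ⟨hsq, fun x y => hker ?_, fun p => hker ?_, fun p q => hsolve _ _ ?_,
    fun p q r => hsolve _ _ ?_⟩
  · simp [π, mul_comm_of_mul_self_eq_one hE (x : G ⧸ T)]
  · rw [Set.mem_preimage, hπ, cheinMul_self_of_mul_self_eq_one hE, Set.mem_singleton_iff]
  · rw [hπ, hπ, cheinMul_comm_of_mul_self_eq_one hE]
  · simp only [hπ, cheinMul_assoc_of_mul_self_eq_one hE]

end NormalSubloop

/-- For L = M(G,2): every normal subloop S of L is either contained in G and a
normal subgroup of G, or else both G/(S∩G) and L/S are elementary abelian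
2-groups (all squares, commutators — and for L also associators — lie in the
kernel).  Conversely, every normal subgroup of G is a normal subloop of L. -/
theorem stmt18 (G : Type*) [Group G] :
    (∀ S : Set (G ⊕ G), IsNormalSubloopM (cheinMul (G := G)) (Sum.inl 1) S →
      ((∃ T : Subgroup G, T.Normal ∧ S = Sum.inl '' (T : Set G)) ∨
        ((∀ x : G, Sum.inl (x * x) ∈ S) ∧
         (∀ x y : G, Sum.inl (x * y * x⁻¹ * y⁻¹) ∈ S) ∧
         (∀ p : G ⊕ G, cheinMul p p ∈ S) ∧
         (∀ p q : G ⊕ G, ∃ s ∈ S, cheinMul p q = cheinMul (cheinMul q p) s) ∧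
         (∀ p q r : G ⊕ G, ∃ s ∈ S,
           cheinMul (cheinMul p q) r = cheinMul (cheinMul p (cheinMul q r)) s)))) ∧
    (∀ T : Subgroup G, T.Normal →
      IsNormalSubloopM (cheinMul (G := G)) (Sum.inl 1) (Sum.inl '' (T : Set G))) := by
  refine ⟨fun S hS => ?_, fun T _ => ?_⟩
  · by_cases hinr : ∃ a, Sum.inr a ∈ S
    · obtain ⟨a, ha⟩ := hinr
      exact Or.inr (squares_commutators_associators_mem_of_inr_mem hS ha)
    · exact Or.inl ⟨_, inlSubgroup_normal hS.1 hS.2.1,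
        eq_image_inl_inlSubgroup hS.1 (not_exists.1 hinr)⟩
  · rw [← preimage_sumMap_mk_inl_one]
    exact cheinMul_isLoopM.isNormalSubloopM_preimage_one cheinMul_isLoopM (map_cheinMul _) rfl
end
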